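/- Define Q(S̄) = Q₁(S̄) + β₀‖S̄‖_{2,1} where Q₁ is an arbitrary real-valued function and β₀ > 0, and suppose S̄_new satisfies Q₁(S̄_new) + β₀ Σ_i ‖(S̄_new)_i‖₂²/(2‖S̄_i‖₂) ≤ Q₁(S̄) + β₀ Σ_i ‖S̄_i‖₂²/(2‖S̄_i‖₂), with all rows S̄_i nonzero. Then Q(S̄_new) ≤ Q(S̄). -/

import Mathlib

open Matrix

/-! The surrogate `‖a‖² / (2‖b‖) + ‖b‖ / 2` majorizes `‖a‖` (AM–GM) and touches it at `a = b`,
so decreasing the surrogate objective decreases the true objective. -/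

lemma le_sq_div_add_half (a : ℝ) {b : ℝ} (hb : 0 < b) : a ≤ a ^ 2 / (2 * b) + b / 2 := by
  rw [div_add_div _ _ (by positivity) two_ne_zero, le_div_iff₀ (by positivity)]
  nlinarith [sq_nonneg (a - b)]

section RowNorms

variable {ι : Type*} [Fintype ι]

lemma sqrt_sum_sq_pos {y : ι → ℝ} (hy : y ≠ 0) : 0 < √(∑ j, y j ^ 2) := by
  obtain ⟨j, hj⟩ := Function.ne_iff.mp hy
  exact Real.sqrt_pos.mpr <| Finset.sum_pos' (fun _ _ => sq_nonneg _)
    ⟨j, Finset.mem_univ j, sq_pos_of_ne_zero hj⟩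

lemma sqrt_sum_sq_le_surrogate (x : ι → ℝ) {y : ι → ℝ} (hy : y ≠ 0) :
    √(∑ j, x j ^ 2) ≤ (∑ j, x j ^ 2) / (2 * √(∑ j, y j ^ 2)) + √(∑ j, y j ^ 2) / 2 := by
  have h := le_sq_div_add_half √(∑ j, x j ^ 2) (sqrt_sum_sq_pos hy)
  rwa [Real.sq_sqrt (Finset.sum_nonneg fun _ _ => sq_nonneg _)] at h

end RowNorms

theorem stmt_13 (b k : ℕ) (Q₁ : Matrix (Fin b) (Fin k) ℝ → ℝ) (β₀ : ℝ) (hβ₀ : 0 < β₀)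
    (Q : Matrix (Fin b) (Fin k) ℝ → ℝ)
    (hQ : Q = fun X => Q₁ X + β₀ * ∑ i, Real.sqrt (∑ j, X i j ^ 2))
    (Sbar Snew : Matrix (Fin b) (Fin k) ℝ)
    (hrows : ∀ i, (fun j => Sbar i j) ≠ 0)
    (hdec : Q₁ Snew + β₀ * ∑ i, (∑ j, Snew i j ^ 2) / (2 * Real.sqrt (∑ j, Sbar i j ^ 2)) ≤
        Q₁ Sbar + β₀ * ∑ i, (∑ j, Sbar i j ^ 2) / (2 * Real.sqrt (∑ j, Sbar i j ^ 2))) :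
    Q Snew ≤ Q Sbar := by
  subst hQ
  have hmajor : ∑ i, √(∑ j, Snew i j ^ 2) ≤
      ∑ i, (∑ j, Snew i j ^ 2) / (2 * √(∑ j, Sbar i j ^ 2)) + ∑ i, √(∑ j, Sbar i j ^ 2) / 2 := by
    rw [← Finset.sum_add_distrib]
    exact Finset.sum_le_sum fun i _ => sqrt_sum_sq_le_surrogate _ (hrows i)
  have htouch : ∑ i, (∑ j, Sbar i j ^ 2) / (2 * √(∑ j, Sbar i j ^ 2)) =
      ∑ i, √(∑ j, Sbar i j ^ 2) / 2 :=
    Finset.sum_congr rfl fun i _ => by rw [mul_comm, ← div_div, Real.div_sqrt]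
  rw [htouch, ← Finset.sum_div] at hdec
  rw [← Finset.sum_div] at hmajor
  dsimp only
  linarith [mul_le_mul_of_nonneg_left hmajor hβ₀.le]
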